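/- Let d ≥ 2 and let G be a closed fractal subgroup of Aut T_d. If H is an open normal subgroup of G that is pronilpotent, then the self-similar closure of H in G is an open, normal, pronilpotent subgroup of G. -/

import Mathlib

/-!
Openness of `J` is inherited from the open subgroup `H ≤ J`. Normality and pronilpotency both come
from the minimality of `J`: each is witnessed by a closed self-similar subgroup of `G` containing
`H`, which therefore contains `J`.

For normality this is the largest subgroup of `J` normalized by `G`. It is self-similar because `G`
is fractal: every `g ∈ G` is a section `k|_v` of some `k ∈ G_v`, and `(k x k⁻¹)|_v = g x|_v g⁻¹`.

For pronilpotency it is the subgroup of those elements of `G` whose action on each level lies in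
the Fitting subgroup of the action of `G` on that level; by Fitting's theorem this is nilpotent, so
all finite level images of `J` are nilpotent. It contains `H` because `H` is normal in `G` with
nilpotent level images, and it is self-similar because the action of `g|_v` on level `m` is
determined by the action of `g` on level `|v| + m`, so that (using fractality once more) sections
carry nilpotent subgroups normalized by `G` to nilpotent subgroups normalized by `G`.
-/

open scoped Pointwise

namespace TreeDyn

/-- Vertices of the `d`-regular rooted tree: finite words over `{0,…,d-1}`,
with the empty word as root and children of `w` the words `w ++ [x]`. -/
abbrev Vertex (d : ℕ) := List (Fin d)

/-- A function on words is length-preserving and prefix-preserving. -/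
def LP (d : ℕ) (f : Vertex d → Vertex d) : Prop :=
  (∀ w : Vertex d, (f w).length = w.length) ∧
    ∀ v w : Vertex d, v <+: w → f v <+: f w

theorem LP.id' (d : ℕ) : LP d id := ⟨fun _ => rfl, fun _ _ h => h⟩

theorem LP.comp {d : ℕ} {f g : Vertex d → Vertex d} (hf : LP d f) (hg : LP d g) :
    LP d (f ∘ g) :=
  ⟨fun w => (hf.1 (g w)).trans (hg.1 w), fun v w h => hf.2 _ _ (hg.2 _ _ h)⟩

/-- The automorphism group of the rooted `d`-regular tree, realized as the subgroup of
permutations of the vertex set which fix the root and preserve the child relation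
(equivalently: length- and prefix-preserving permutations). -/
def treeAut (d : ℕ) : Subgroup (Equiv.Perm (Vertex d)) where
  carrier := {g | LP d ⇑g ∧ LP d ⇑g⁻¹}
  one_mem' := ⟨LP.id' d, by simpa using LP.id' d⟩
  mul_mem' := by
    rintro a b ⟨ha1, ha2⟩ ⟨hb1, hb2⟩
    refine ⟨?_, ?_⟩
    · simpa [Equiv.Perm.coe_mul] using ha1.comp hb1
    · rw [mul_inv_rev]
      simpa [Equiv.Perm.coe_mul] using hb2.comp ha2
  inv_mem' := by
    rintro a ⟨h1, h2⟩
    exact ⟨h2, by simpa using h1⟩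

/-- `Aut T_d`, the automorphism group of the `d`-regular rooted tree. -/
abbrev AutT (d : ℕ) := ↥(treeAut d)

namespace AutT

variable {d : ℕ}

/-- The underlying permutation of the vertices. -/
def toPerm (g : AutT d) : Equiv.Perm (Vertex d) := g.1

theorem toPerm_mul (g h : AutT d) : (g * h).toPerm = g.toPerm * h.toPerm := rfl

theorem toPerm_inv (g : AutT d) : (g⁻¹).toPerm = (g.toPerm)⁻¹ := rfl

theorem toPerm_one : (1 : AutT d).toPerm = 1 := rfl

theorem length_apply (g : AutT d) (w : Vertex d) : (g.toPerm w).length = w.length :=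
  g.2.1.1 w

theorem prefix_apply (g : AutT d) {v w : Vertex d} (h : v <+: w) :
    g.toPerm v <+: g.toPerm w :=
  g.2.1.2 v w h

theorem take_apply (g : AutT d) (v u : Vertex d) :
    (g.toPerm (v ++ u)).take v.length = g.toPerm v := by
  have h : g.toPerm v <+: g.toPerm (v ++ u) := g.prefix_apply (List.prefix_append v u)
  have h2 := List.prefix_iff_eq_take.mp h
  rw [length_apply] at h2
  exact h2.symm

theorem apply_append (g : AutT d) (v u : Vertex d) :
    g.toPerm (v ++ u) = g.toPerm v ++ (g.toPerm (v ++ u)).drop v.length := by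
  conv_lhs => rw [← List.take_append_drop v.length (g.toPerm (v ++ u))]
  rw [take_apply]

/-- The section function: the action of `g` on the subtree over `v`, transported
to the whole tree. -/
def secFun (g : AutT d) (v : Vertex d) : Vertex d → Vertex d :=
  fun u => (g.toPerm (v ++ u)).drop v.length

theorem secFun_spec (g : AutT d) (v u : Vertex d) :
    g.toPerm (v ++ u) = g.toPerm v ++ secFun g v u :=
  apply_append g v u

theorem secFun_left (g : AutT d) (v u : Vertex d) :
    secFun g⁻¹ (g.toPerm v) (secFun g v u) = u := by
  have h1 := secFun_spec g⁻¹ (g.toPerm v) (secFun g v u)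
  rw [← secFun_spec g v u] at h1
  rw [toPerm_inv] at h1
  simp only [Equiv.Perm.inv_def, Equiv.symm_apply_apply] at h1
  exact (List.append_cancel_left h1).symm

theorem LP_secFun (g : AutT d) (v : Vertex d) : LP d (secFun g v) := by
  constructor
  · intro w
    simp only [secFun, List.length_drop, length_apply, List.length_append]
    omega
  · intro u1 u2 h
    have h2 : g.toPerm (v ++ u1) <+: g.toPerm (v ++ u2) := by
      refine g.prefix_apply ?_
      obtain ⟨t, ht⟩ := h
      exact ⟨t, by rw [List.append_assoc, ht]⟩
    exact h2.drop v.length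

/-- The section of the tree automorphism `g` at the vertex `v`: the automorphism `g|_v` with
`g (v ++ u) = g v ++ g|_v u`. -/
def sec (g : AutT d) (v : Vertex d) : AutT d :=
  ⟨{ toFun := secFun g v
     invFun := secFun g⁻¹ (g.toPerm v)
     left_inv := secFun_left g v
     right_inv := by
       intro u
       have h := secFun_left g⁻¹ (g.toPerm v) u
       rw [inv_inv] at h
       rw [toPerm_inv] at h
       simp only [Equiv.Perm.inv_def, Equiv.symm_apply_apply] at h
       exact h },
   by
     refine ⟨LP_secFun g v, ?_⟩
     have : ⇑(({ toFun := secFun g v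
                 invFun := secFun g⁻¹ (g.toPerm v)
                 left_inv := secFun_left g v
                 right_inv := by
                   intro u
                   have h := secFun_left g⁻¹ (g.toPerm v) u
                   rw [inv_inv] at h
                   rw [toPerm_inv] at h
                   simp only [Equiv.Perm.inv_def, Equiv.symm_apply_apply] at h
                   exact h } : Equiv.Perm (Vertex d))⁻¹) = secFun g⁻¹ (g.toPerm v) := rfl
     rw [this]
     exact LP_secFun g⁻¹ (g.toPerm v)⟩

theorem sec_apply (g : AutT d) (v u : Vertex d) :
    (sec g v).toPerm u = (g.toPerm (v ++ u)).drop v.length := rfl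

end AutT

open AutT

/-- The stabilizer of the vertex `v` in `Aut T_d`. -/
def stabT (d : ℕ) (v : Vertex d) : Subgroup (AutT d) where
  carrier := {g | g.toPerm v = v}
  one_mem' := rfl
  mul_mem' := by
    intro a b ha hb
    show (a * b).toPerm v = v
    rw [toPerm_mul, Equiv.Perm.mul_apply]
    rw [show b.toPerm v = v from hb, show a.toPerm v = v from ha]
  inv_mem' := by
    intro a ha
    show (a⁻¹).toPerm v = v
    rw [toPerm_inv]
    rw [Equiv.Perm.inv_eq_iff_eq]
    exact (show a.toPerm v = v from ha).symm

/-- The self-similarity homomorphism `π_v` from the stabilizer of `v` to `Aut T_d`,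
`g ↦ g|_v`. -/
def secHom (d : ℕ) (v : Vertex d) : (stabT d v) →* AutT d where
  toFun g := sec g.1 v
  map_one' := by
    apply Subtype.ext
    apply Equiv.ext
    intro u
    show ((1 : AutT d).toPerm (v ++ u)).drop v.length = (1 : AutT d).toPerm u
    rw [toPerm_one]
    simp [List.drop_left]
  map_mul' := by
    intro a b
    apply Subtype.ext
    apply Equiv.ext
    intro u
    have hb : (b.1).toPerm v = v := b.2
    show ((a.1 * b.1).toPerm (v ++ u)).drop v.length
        = (sec a.1 v).toPerm ((sec b.1 v).toPerm u)
    rw [toPerm_mul, Equiv.Perm.mul_apply]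
    congr 1
    congr 1
    have h := secFun_spec b.1 v u
    rw [hb] at h
    exact h

/-- The image subgroup `H^v = π_v(H_v)` of the stabilizer of `v` in `H` under the
self-similarity map. -/
def secSG (d : ℕ) (H : Subgroup (AutT d)) (v : Vertex d) : Subgroup (AutT d) :=
  (H.subgroupOf (stabT d v)).map (secHom d v)

/-- A subgroup of `Aut T_d` is self-similar if `H^v ≤ H` for every vertex `v`. -/
def IsSelfSimilar (d : ℕ) (H : Subgroup (AutT d)) : Prop :=
  ∀ v : Vertex d, secSG d H v ≤ H

/-- A subgroup of `Aut T_d` is fractal if `H^v = H` for every vertex `v`. -/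
def IsFractal (d : ℕ) (H : Subgroup (AutT d)) : Prop :=
  ∀ v : Vertex d, secSG d H v = H

end TreeDyn
namespace TreeDyn

open AutT

variable {d : ℕ}

instance : TopologicalSpace (Vertex d) := ⊥
instance : DiscreteTopology (Vertex d) := ⟨rfl⟩

/-- The profinite topology on `Aut T_d`: the topology of pointwise convergence on vertices. -/
instance : TopologicalSpace (AutT d) :=
  TopologicalSpace.induced (fun g : AutT d => (g.toPerm : Vertex d → Vertex d)) inferInstance

theorem continuous_toFun : Continuous fun g : AutT d => (g.toPerm : Vertex d → Vertex d) :=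
  continuous_induced_dom

theorem continuous_ev (x : Vertex d) : Continuous fun g : AutT d => g.toPerm x :=
  (continuous_apply x).comp continuous_toFun

instance : IsTopologicalGroup (AutT d) where
  continuous_mul := by
    apply continuous_induced_rng.2
    show Continuous fun p : AutT d × AutT d => ((p.1 * p.2).toPerm : Vertex d → Vertex d)
    apply continuous_pi
    intro x
    rw [continuous_discrete_rng]
    intro z
    have heq : ((fun p : AutT d × AutT d => (p.1 * p.2).toPerm x)) ⁻¹' {z}
        = ⋃ y : Vertex d, ((fun p : AutT d × AutT d => p.2.toPerm x) ⁻¹' {y})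
            ∩ ((fun p : AutT d × AutT d => p.1.toPerm y) ⁻¹' {z}) := by
      ext p
      simp only [Set.mem_preimage, Set.mem_singleton_iff, Set.mem_iUnion, Set.mem_inter_iff]
      constructor
      · intro h
        exact ⟨p.2.toPerm x, rfl, by rw [toPerm_mul, Equiv.Perm.mul_apply] at h; exact h⟩
      · rintro ⟨y, h1, h2⟩
        rw [toPerm_mul, Equiv.Perm.mul_apply, h1, h2]
    rw [heq]
    apply isOpen_iUnion
    intro y
    exact ((isOpen_discrete _).preimage ((continuous_ev x).comp continuous_snd)).inter
      ((isOpen_discrete _).preimage ((continuous_ev y).comp continuous_fst))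
  continuous_inv := by
    apply continuous_induced_rng.2
    show Continuous fun g : AutT d => ((g⁻¹).toPerm : Vertex d → Vertex d)
    apply continuous_pi
    intro x
    rw [continuous_discrete_rng]
    intro z
    have heq : (fun g : AutT d => (g⁻¹).toPerm x) ⁻¹' {z}
        = (fun g : AutT d => g.toPerm z) ⁻¹' {x} := by
      ext g
      simp only [Set.mem_preimage, Set.mem_singleton_iff]
      rw [toPerm_inv]
      exact Equiv.Perm.inv_eq_iff_eq.trans eq_comm
    rw [heq]
    exact (isOpen_discrete _).preimage (continuous_ev z)

end TreeDyn
namespace TreeDyn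

open AutT

/-- `J` is the self-similar closure of `H` in `G`: the smallest closed self-similar
subgroup of `G` containing `H`. -/
def IsSelfSimilarClosure (d : ℕ) (G H J : Subgroup (AutT d)) : Prop :=
  H ≤ J ∧ J ≤ G ∧ IsClosed (J : Set (AutT d)) ∧ IsSelfSimilar d J ∧
    ∀ J' : Subgroup (AutT d), H ≤ J' → J' ≤ G → IsClosed (J' : Set (AutT d)) →
      IsSelfSimilar d J' → J ≤ J'

/-- The pointwise stabilizer in `Aut T_d` of the vertices at level `m`. -/
def levelStab (d : ℕ) (m : ℕ) : Subgroup (AutT d) where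
  carrier := {g | ∀ v : Vertex d, v.length = m → g.toPerm v = v}
  one_mem' := fun _ _ => rfl
  mul_mem' := by
    intro a b ha hb v hv
    show (a * b).toPerm v = v
    rw [toPerm_mul, Equiv.Perm.mul_apply, hb v hv, ha v hv]
  inv_mem' := by
    intro a ha v hv
    show (a⁻¹).toPerm v = v
    rw [toPerm_inv, Equiv.Perm.inv_eq_iff_eq]
    exact (ha v hv).symm

/-- A topological group is pronilpotent if its quotient by every open normal subgroup
is nilpotent. -/
def Pronilpotent (G : Type*) [Group G] [TopologicalSpace G] : Prop :=
  ∀ (N : Subgroup G) [N.Normal], IsOpen (N : Set G) → Group.IsNilpotent (G ⧸ N)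

/-- A topological group is pro-`p` if its quotient by every open normal subgroup
is a `p`-group. -/
def IsProP (p : ℕ) (G : Type*) [Group G] [TopologicalSpace G] : Prop :=
  ∀ (N : Subgroup G) [N.Normal], IsOpen (N : Set G) → IsPGroup p (G ⧸ N)

/-- A topological group is prosolvable if its quotient by every open normal subgroup
is solvable. -/
def Prosolvable (G : Type*) [Group G] [TopologicalSpace G] : Prop :=
  ∀ (N : Subgroup G) [N.Normal], IsOpen (N : Set G) → IsSolvable (G ⧸ N)

/-- The Frattini subgroup of a topological group: the intersection of its
maximal open (proper) subgroups. -/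
def frattiniOpen (G : Type*) [Group G] [TopologicalSpace G] : Subgroup G :=
  sInf {M : Subgroup G | IsOpen (M : Set G) ∧ M ≠ ⊤ ∧
    ∀ M' : Subgroup G, IsOpen (M' : Set G) → M < M' → M' = ⊤}

end TreeDyn
namespace TreeDyn

open AutT

variable {d : ℕ}

/-- The cyclic successor on `Fin d`. -/
def succFin (x : Fin d) : Fin d :=
  ⟨(x.1 + 1) % d, Nat.mod_lt _ (Nat.lt_of_le_of_lt (Nat.zero_le _) x.2)⟩

/-- The cyclic predecessor on `Fin d`. -/
def predFin (x : Fin d) : Fin d :=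
  ⟨(x.1 + (d - 1)) % d, Nat.mod_lt _ (Nat.lt_of_le_of_lt (Nat.zero_le _) x.2)⟩

theorem predFin_succFin (x : Fin d) : predFin (succFin x) = x := by
  have hd : 0 < d := Nat.lt_of_le_of_lt (Nat.zero_le _) x.2
  apply Fin.ext
  show ((x.1 + 1) % d + (d - 1)) % d = x.1
  rw [Nat.mod_add_mod, show x.1 + 1 + (d - 1) = x.1 + d by omega, Nat.add_mod_right,
    Nat.mod_eq_of_lt x.2]

theorem succFin_predFin (x : Fin d) : succFin (predFin x) = x := by
  have hd : 0 < d := Nat.lt_of_le_of_lt (Nat.zero_le _) x.2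
  apply Fin.ext
  show ((x.1 + (d - 1)) % d + 1) % d = x.1
  rw [Nat.mod_add_mod, show x.1 + (d - 1) + 1 = x.1 + d by omega, Nat.add_mod_right,
    Nat.mod_eq_of_lt x.2]

theorem succFin_val_eq_zero_iff (x : Fin d) : (succFin x).1 = 0 ↔ x.1 + 1 = d := by
  show (x.1 + 1) % d = 0 ↔ x.1 + 1 = d
  by_cases h : x.1 + 1 = d
  · simp [h, Nat.mod_self]
  · rw [Nat.mod_eq_of_lt (by omega)]
    omega

theorem predFin_val_succ_eq_iff (x : Fin d) : (predFin x).1 + 1 = d ↔ x.1 = 0 := by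
  have hd : 0 < d := Nat.lt_of_le_of_lt (Nat.zero_le _) x.2
  show (x.1 + (d - 1)) % d + 1 = d ↔ x.1 = 0
  rcases Nat.eq_zero_or_pos x.1 with h | h
  · rw [h]
    simp only [Nat.zero_add]
    rw [Nat.mod_eq_of_lt (show d - 1 < d by omega)]
    simp only [iff_true, eq_self_iff_true]
    omega
  · rw [show x.1 + (d - 1) = (x.1 - 1) + d by omega, Nat.add_mod_right,
      Nat.mod_eq_of_lt (show x.1 - 1 < d by omega)]
    omega

/-- The odometer function: adds one with carrying, on words read root-first. -/
def odF (d : ℕ) : Vertex d → Vertex d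
  | [] => []
  | x :: u => succFin x :: (if x.1 + 1 = d then odF d u else u)

/-- The inverse odometer function. -/
def odG (d : ℕ) : Vertex d → Vertex d
  | [] => []
  | x :: u => predFin x :: (if x.1 = 0 then odG d u else u)

theorem odG_odF (u : Vertex d) : odG d (odF d u) = u := by
  induction u with
  | nil => rfl
  | cons x t ih =>
    simp only [odF, odG, predFin_succFin]
    by_cases h : x.1 + 1 = d
    · rw [if_pos h, if_pos ((succFin_val_eq_zero_iff x).mpr h), ih]
    · rw [if_neg h, if_neg (fun hc => h ((succFin_val_eq_zero_iff x).mp hc))]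

theorem odF_odG (u : Vertex d) : odF d (odG d u) = u := by
  induction u with
  | nil => rfl
  | cons x t ih =>
    simp only [odF, odG, succFin_predFin]
    by_cases h : x.1 = 0
    · rw [if_pos h, if_pos ((predFin_val_succ_eq_iff x).mpr h), ih]
    · rw [if_neg h, if_neg (fun hc => h ((predFin_val_succ_eq_iff x).mp hc))]

theorem odF_append (a b : Vertex d) :
    odF d (a ++ b) = odF d a ++ (if ∀ x ∈ a, x.1 + 1 = d then odF d b else b) := by
  induction a with
  | nil => simp [odF]
  | cons x t ih =>
    by_cases h : x.1 + 1 = d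
    · by_cases h2 : ∀ y ∈ t, y.1 + 1 = d
      · have hall : ∀ y ∈ x :: t, y.1 + 1 = d := by
          intro y hy
          rcases List.mem_cons.mp hy with rfl | hy
          · exact h
          · exact h2 y hy
        simp only [List.cons_append, List.append_eq, odF, if_pos h, if_pos h2, if_pos hall, ih]
      · have hall : ¬ ∀ y ∈ x :: t, y.1 + 1 = d :=
          fun hc => h2 fun y hy => hc y (List.mem_cons_of_mem x hy)
        simp only [List.cons_append, List.append_eq, odF, if_pos h, if_neg h2, if_neg hall, ih]
    · have hall : ¬ ∀ y ∈ x :: t, y.1 + 1 = d :=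
        fun hc => h (hc x List.mem_cons_self)
      simp only [List.cons_append, List.append_eq, odF, if_neg h, if_neg hall]

theorem odG_append (a b : Vertex d) :
    odG d (a ++ b) = odG d a ++ (if ∀ x ∈ a, x.1 = 0 then odG d b else b) := by
  induction a with
  | nil => simp [odG]
  | cons x t ih =>
    by_cases h : x.1 = 0
    · by_cases h2 : ∀ y ∈ t, y.1 = 0
      · have hall : ∀ y ∈ x :: t, y.1 = 0 := by
          intro y hy
          rcases List.mem_cons.mp hy with rfl | hy
          · exact h
          · exact h2 y hy
        simp only [List.cons_append, List.append_eq, odG, if_pos h, if_pos h2, if_pos hall, ih]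
      · have hall : ¬ ∀ y ∈ x :: t, y.1 = 0 :=
          fun hc => h2 fun y hy => hc y (List.mem_cons_of_mem x hy)
        simp only [List.cons_append, List.append_eq, odG, if_pos h, if_neg h2, if_neg hall, ih]
    · have hall : ¬ ∀ y ∈ x :: t, y.1 = 0 :=
        fun hc => h (hc x List.mem_cons_self)
      simp only [List.cons_append, List.append_eq, odG, if_neg h, if_neg hall]

theorem LP_odF : LP d (odF d) := by
  constructor
  · intro w
    induction w with
    | nil => rfl
    | cons x t ih =>
      simp only [odF]
      by_cases h : x.1 + 1 = d <;> simp [h, ih]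
  · intro v w h
    obtain ⟨t, rfl⟩ := h
    rw [odF_append]
    exact ⟨_, rfl⟩

theorem LP_odG : LP d (odG d) := by
  constructor
  · intro w
    induction w with
    | nil => rfl
    | cons x t ih =>
      simp only [odG]
      by_cases h : x.1 = 0 <;> simp [h, ih]
  · intro v w h
    obtain ⟨t, rfl⟩ := h
    rw [odG_append]
    exact ⟨_, rfl⟩

/-- The standard odometer as a permutation of the vertices. -/
def odPerm (d : ℕ) : Equiv.Perm (Vertex d) where
  toFun := odF d
  invFun := odG d
  left_inv := odG_odF
  right_inv := odF_odG

/-- The standard odometer `ω ∈ Aut T_d` (adds one to a `d`-adic digit string,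
with carrying). -/
def od (d : ℕ) : AutT d :=
  ⟨odPerm d, ⟨LP_odF, LP_odG⟩⟩

/-- The standard `d`-cycle `σ = (0 1 … d-1)` on the first level. -/
def sigmaFin (d : ℕ) : Equiv.Perm (Fin d) where
  toFun := succFin
  invFun := predFin
  left_inv := predFin_succFin
  right_inv := succFin_predFin

end TreeDyn


namespace Subgroup

variable {X : Type*} [Group X]

theorem isNilpotent_of_le {A B : Subgroup X} (h : A ≤ B) [Group.IsNilpotent B] :
    Group.IsNilpotent A := by
  obtain ⟨n, hn⟩ := (isNilpotent_iff_lowerCentralSeries B).mp ‹_›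
  exact (isNilpotent_iff_lowerCentralSeries A).mpr
    ⟨n, le_bot_iff.mp (hn ▸ lowerCentralSeries_mono n h)⟩

theorem isNilpotent_map_of_ker_le {Y Z : Type*} [Group Y] [Group Z] (α : X →* Y) (β : X →* Z)
    (h : α.ker ≤ β.ker) (S : Subgroup X) [Group.IsNilpotent (S.map α)] :
    Group.IsNilpotent (S.map β) := by
  obtain ⟨n, hn⟩ := (isNilpotent_iff_lowerCentralSeries (S.map α)).mp ‹_›
  rw [← map_lowerCentralSeries, map_eq_bot_iff] at hn
  refine (isNilpotent_iff_lowerCentralSeries _).mpr ⟨n, ?_⟩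
  rw [← map_lowerCentralSeries, map_eq_bot_iff]
  exact hn.trans h

theorem index_dvd_relIndex_mul_relIndex {O A B : Subgroup X} [O.Normal] [A.Normal]
    (h : A ⊔ B = ⊤) : O.index ∣ O.relIndex A * O.relIndex B := by
  have hOA : (O ⊔ A).index = (O ⊔ A).relIndex B := by
    rw [← relIndex_top_right, ← relIndex_sup_left B (O ⊔ A), sup_assoc, h, sup_top_eq]
  rw [← relIndex_mul_index (le_sup_left : O ≤ O ⊔ A), relIndex_sup_left, hOA]
  exact mul_dvd_mul_left _ (relIndex_dvd_of_le_left B le_sup_left)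

def normalCoreIn (G J : Subgroup X) : Subgroup X :=
  ⨅ g : G, J.comap (MulAut.conj (g : X)).toMonoidHom

theorem mem_normalCoreIn {G J : Subgroup X} {x : X} :
    x ∈ normalCoreIn G J ↔ ∀ g ∈ G, g * x * g⁻¹ ∈ J := by
  simp [normalCoreIn, mem_iInf]

theorem normalCoreIn_le {G J : Subgroup X} : normalCoreIn G J ≤ J := fun x hx => by
  simpa using mem_normalCoreIn.mp hx 1 (one_mem G)

theorem le_normalizer_normalCoreIn {G J : Subgroup X} : G ≤ normalizer (normalCoreIn G J) :=
  le_normalizer_iff.mpr fun g hg x hx => mem_normalCoreIn.mpr fun k hk => by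
    simpa [mul_assoc] using mem_normalCoreIn.mp hx (k * g) (mul_mem hk hg)

theorem le_normalCoreIn {G J L : Subgroup X} (hLJ : L ≤ J) (hGL : G ≤ normalizer L) :
    L ≤ normalCoreIn G J := fun x hx =>
  mem_normalCoreIn.mpr fun g hg => hLJ (le_normalizer_iff.mp hGL g hg x hx)

theorem isClosed_normalCoreIn [TopologicalSpace X] [IsTopologicalGroup X] {G J : Subgroup X}
    (hJ : IsClosed (J : Set X)) : IsClosed (normalCoreIn G J : Set X) := by
  rw [normalCoreIn, coe_iInf]
  refine isClosed_iInter fun g => hJ.preimage ?_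
  change Continuous fun x => (g : X) * x * (g : X)⁻¹
  fun_prop

/-- For finite `X` this is the image in `X` of the Fitting subgroup of `D`. -/
def fitting (D : Subgroup X) : Subgroup X :=
  sSup {A | A ≤ D ∧ D ≤ normalizer A ∧ Group.IsNilpotent A}

theorem le_fitting {A D : Subgroup X} (hAD : A ≤ D) (hDA : D ≤ normalizer A)
    [Group.IsNilpotent A] : A ≤ fitting D :=
  le_sSup ⟨hAD, hDA, ‹_›⟩

section Finite

variable [Finite X]

theorem exists_normal_isPGroup_not_dvd_relIndex (p : ℕ) [Fact p.Prime] (A : Subgroup X)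
    [A.Normal] [Group.IsNilpotent A] :
    ∃ S : Subgroup X, S.Normal ∧ IsPGroup p S ∧ ¬ p ∣ S.relIndex A := by
  obtain ⟨Q⟩ : Nonempty (Sylow p A) := inferInstance
  have : (Q : Subgroup A).Characteristic := Q.characteristic_of_normal inferInstance
  refine ⟨(Q : Subgroup A).map A.subtype, inferInstance, Q.2.map A.subtype, ?_⟩
  rw [relIndex, ← comap_subtype, comap_map_eq_self_of_injective A.subtype_injective]
  exact Q.not_dvd_index

/-- Fitting's theorem. The `p`-parts of `A` and `B` generate a normal `p`-subgroup whose index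
is prime to `p`, hence a normal Sylow `p`-subgroup. -/
theorem isNilpotent_of_sup_eq_top {A B : Subgroup X} [A.Normal] [B.Normal] [Group.IsNilpotent A]
    [Group.IsNilpotent B] (h : A ⊔ B = ⊤) : Group.IsNilpotent X := by
  refine (Group.isNilpotent_of_finite_tfae.out 3 0).mp fun p hp P => ?_
  have := hp
  obtain ⟨SA, _, hSA, hpA⟩ := exists_normal_isPGroup_not_dvd_relIndex p A
  obtain ⟨SB, _, hSB, hpB⟩ := exists_normal_isPGroup_not_dvd_relIndex p B
  have hS : IsPGroup p ↥(SA ⊔ SB) := hSA.to_sup_of_normal_right hSB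
  have hpS : ¬ p ∣ (SA ⊔ SB).index := fun hdvd => by
    rcases (Nat.Prime.dvd_mul hp.out).mp (hdvd.trans (index_dvd_relIndex_mul_relIndex h)) with
      hdA | hdB
    · exact hpA (hdA.trans (relIndex_dvd_of_le_left A le_sup_left))
    · exact hpB (hdB.trans (relIndex_dvd_of_le_left B le_sup_right))
  have := Sylow.unique_of_normal (hS.toSylow hpS) (inferInstanceAs (SA ⊔ SB).Normal)
  exact Subsingleton.elim (hS.toSylow hpS) P ▸ inferInstanceAs (SA ⊔ SB).Normal

theorem isNilpotent_sup {A B : Subgroup X} (hA : A ⊔ B ≤ normalizer A)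
    (hB : A ⊔ B ≤ normalizer B) [Group.IsNilpotent A] [Group.IsNilpotent B] :
    Group.IsNilpotent ↥(A ⊔ B) := by
  have : (A.subgroupOf (A ⊔ B)).Normal :=
    (normal_subgroupOf_iff_le_normalizer le_sup_left).mpr hA
  have : (B.subgroupOf (A ⊔ B)).Normal :=
    (normal_subgroupOf_iff_le_normalizer le_sup_right).mpr hB
  have : Group.IsNilpotent (A.subgroupOf (A ⊔ B)) :=
    Group.nilpotent_of_mulEquiv (subgroupOfEquivOfLe le_sup_left).symm
  have : Group.IsNilpotent (B.subgroupOf (A ⊔ B)) :=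
    Group.nilpotent_of_mulEquiv (subgroupOfEquivOfLe le_sup_right).symm
  exact isNilpotent_of_sup_eq_top
    (by rw [← subgroupOf_sup le_sup_left le_sup_right, subgroupOf_self])

theorem fitting_spec (D : Subgroup X) :
    fitting D ≤ D ∧ D ≤ normalizer (fitting D) ∧ Group.IsNilpotent (fitting D) := by
  refine SupClosed.sSup_mem (s := {A | A ≤ D ∧ D ≤ normalizer A ∧ Group.IsNilpotent A}) ?_
    (Set.toFinite _) ⟨bot_le, le_normalizer_of_normal, inferInstance⟩ subset_rfl
  rintro A ⟨hAD, hDA, hA⟩ B ⟨hBD, hDB, hB⟩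
  have hABD : A ⊔ B ≤ D := sup_le hAD hBD
  exact ⟨hABD, le_inf hDA hDB |>.trans (normalizer_inf_normalizer_le_normalizer_sup A B),
    isNilpotent_sup (hABD.trans hDA) (hABD.trans hDB)⟩

end Finite

end Subgroup

namespace TreeDyn

open AutT Subgroup

variable {d : ℕ}

def levelHom (d m : ℕ) : AutT d →* Equiv.Perm (List.Vector (Fin d) m) where
  toFun g := g.toPerm.subtypePerm fun w => by rw [length_apply]
  map_one' := rfl
  map_mul' _ _ := rfl

theorem ker_levelHom (m : ℕ) : (levelHom d m).ker = levelStab d m := by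
  ext g
  exact ⟨fun h v hv => congrArg Subtype.val (Equiv.ext_iff.mp h ⟨v, hv⟩),
    fun h => Equiv.ext fun w => Subtype.ext (h w.1 w.2)⟩

theorem isOpen_setOf_levelHom_eq {m : ℕ} (σ : Equiv.Perm (List.Vector (Fin d) m)) :
    IsOpen {g : AutT d | levelHom d m g = σ} := by
  have : {g : AutT d | levelHom d m g = σ} =
      ⋂ w : List.Vector (Fin d) m, (fun g : AutT d => g.toPerm w.1) ⁻¹' {(σ w).1} := by
    ext g
    simp only [Set.mem_ofPred_eq, Equiv.ext_iff, Set.mem_iInter, Set.mem_preimage,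
      Set.mem_singleton_iff]
    exact forall_congr' fun w => Subtype.ext_iff
  rw [this]
  exact isOpen_iInter_of_finite fun w => (isOpen_discrete _).preimage (continuous_ev w.1)

theorem isClopen_preimage_levelHom {m : ℕ} (S : Set (Equiv.Perm (List.Vector (Fin d) m))) :
    IsClopen (levelHom d m ⁻¹' S) := by
  have hopen : ∀ S : Set (Equiv.Perm (List.Vector (Fin d) m)), IsOpen (levelHom d m ⁻¹' S) :=
    fun S => by
      rw [← Set.biUnion_preimage_singleton]
      exact isOpen_biUnion fun σ _ => isOpen_setOf_levelHom_eq σ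
  exact ⟨by rw [← isOpen_compl_iff, ← Set.preimage_compl]; exact hopen _, hopen S⟩

theorem toPerm_eq_of_mem_levelStab (hd : 0 < d) {g : AutT d} {m : ℕ} (hg : g ∈ levelStab d m)
    {v : Vertex d} (hv : v.length ≤ m) : g.toPerm v = v := by
  set u := List.replicate (m - v.length) (⟨0, hd⟩ : Fin d)
  have h := take_apply g v u
  rw [hg (v ++ u) (by simp [u]; omega), List.take_left] at h
  exact h.symm

theorem exists_levelStab_subset (hd : 0 < d) {U : Set (AutT d)} (hU : IsOpen U)
    (h1 : (1 : AutT d) ∈ U) : ∃ m, (levelStab d m : Set (AutT d)) ⊆ U := by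
  obtain ⟨t, ht, rfl⟩ := isOpen_induced_iff.mp hU
  obtain ⟨I, u, hu, hsub⟩ := isOpen_pi_iff.mp ht _ h1
  refine ⟨I.sup List.length, fun g hg => hsub fun v hv => ?_⟩
  show g.toPerm v ∈ u v
  rw [toPerm_eq_of_mem_levelStab hd hg (Finset.le_sup hv)]
  exact (hu v hv).2

theorem pronilpotent_iff (hd : 0 < d) (K : Subgroup (AutT d)) :
    Pronilpotent K ↔ ∀ m, Group.IsNilpotent (K.map (levelHom d m)) := by
  have hrange : ∀ m,
      K.map (levelHom d m) = (⊤ : Subgroup K).map ((levelHom d m).comp K.subtype) :=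
    fun m => by rw [← MonoidHom.range_eq_map, MonoidHom.range_comp, range_subtype]
  constructor
  · intro hK m
    rw [hrange]
    set N := ((levelHom d m).comp K.subtype).ker
    have hN : IsOpen (N : Set K) :=
      (isClopen_preimage_levelHom {1}).isOpen.preimage continuous_subtype_val
    have := hK N hN
    exact isNilpotent_map_of_ker_le (QuotientGroup.mk' N) _ (QuotientGroup.ker_mk' N).le ⊤
  · intro hK N _ hN
    obtain ⟨U, hU, hNU⟩ := isOpen_induced_iff.mp hN
    obtain ⟨m, hm⟩ := exists_levelStab_subset hd hU
      (show (1 : K) ∈ Subtype.val ⁻¹' U from hNU ▸ one_mem N)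
    have hker : ((levelHom d m).comp K.subtype).ker ≤ (QuotientGroup.mk' N).ker := by
      intro x hx
      rw [QuotientGroup.ker_mk', ← SetLike.mem_coe, ← hNU]
      exact hm ((ker_levelHom m).le hx)
    have := hK m
    rw [hrange] at this
    have := isNilpotent_map_of_ker_le _ _ hker ⊤
    rw [map_top_of_surjective _ (QuotientGroup.mk'_surjective N)] at this
    exact Group.isNilpotent_top.mp this

theorem sec_mem_levelStab {g : AutT d} {v : Vertex d} {m : ℕ}
    (hg : g ∈ levelStab d (v.length + m)) : sec g v ∈ levelStab d m := fun u hu => by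
  rw [sec_apply, hg (v ++ u) (by simp [hu]), List.drop_left]

theorem secSG_mono {K L : Subgroup (AutT d)} (h : K ≤ L) (v : Vertex d) :
    secSG d K v ≤ secSG d L v :=
  map_mono (comap_mono h)

theorem isNilpotent_map_secSG {L : Subgroup (AutT d)} {v : Vertex d} {m : ℕ}
    [Group.IsNilpotent (L.map (levelHom d (v.length + m)))] :
    Group.IsNilpotent ((secSG d L v).map (levelHom d m)) := by
  set α := (levelHom d (v.length + m)).comp (stabT d v).subtype
  have : Group.IsNilpotent ((L.subgroupOf (stabT d v)).map α) := by
    rw [← map_map, subgroupOf_map_subtype]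
    exact isNilpotent_of_le (map_mono inf_le_left)
  have hker : α.ker ≤ ((levelHom d m).comp (secHom d v)).ker := fun x hx => by
    rw [MonoidHom.mem_ker, MonoidHom.comp_apply, ← MonoidHom.mem_ker, ker_levelHom]
    exact sec_mem_levelStab (by rw [← ker_levelHom]; exact hx)
  rw [secSG, map_map]
  exact isNilpotent_map_of_ker_le α _ hker _

theorem IsFractal.le_normalizer_secSG {G L : Subgroup (AutT d)} (hG : IsFractal d G)
    (hGL : G ≤ normalizer L) (v : Vertex d) : G ≤ normalizer (secSG d L v) :=
  calc G = (G.subgroupOf (stabT d v)).map (secHom d v) := (hG v).symm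
    _ ≤ ((normalizer L).subgroupOf (stabT d v)).map (secHom d v) := map_mono (comap_mono hGL)
    _ ≤ (normalizer (L.subgroupOf (stabT d v))).map (secHom d v) :=
      map_mono (le_normalizer_comap _)
    _ ≤ normalizer (secSG d L v) := le_normalizer_map _

theorem IsFractal.isSelfSimilar_normalCoreIn {G J : Subgroup (AutT d)} (hG : IsFractal d G)
    (hJ : IsSelfSimilar d J) : IsSelfSimilar d (normalCoreIn G J) := fun v =>
  le_normalCoreIn ((secSG_mono normalCoreIn_le v).trans (hJ v))
    (hG.le_normalizer_secSG le_normalizer_normalCoreIn v)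

def levelwiseFitting (d : ℕ) (G : Subgroup (AutT d)) : Subgroup (AutT d) :=
  G ⊓ ⨅ m, (fitting (G.map (levelHom d m))).comap (levelHom d m)

section LevelwiseFitting

variable {G : Subgroup (AutT d)}

theorem levelwiseFitting_le : levelwiseFitting d G ≤ G := inf_le_left

theorem isClosed_levelwiseFitting (hG : IsClosed (G : Set (AutT d))) :
    IsClosed (levelwiseFitting d G : Set (AutT d)) := by
  rw [levelwiseFitting, coe_inf, coe_iInf]
  refine hG.inter (isClosed_iInter fun m => ?_)
  rw [coe_comap]
  exact (isClopen_preimage_levelHom _).isClosed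

theorem isNilpotent_map_levelwiseFitting (m : ℕ) :
    Group.IsNilpotent ((levelwiseFitting d G).map (levelHom d m)) := by
  have := (fitting_spec (G.map (levelHom d m))).2.2
  refine isNilpotent_of_le (B := fitting (G.map (levelHom d m))) (map_le_iff_le_comap.mpr ?_)
  exact inf_le_right.trans (iInf_le _ m)

theorem le_normalizer_levelwiseFitting : G ≤ normalizer (levelwiseFitting d G) := by
  refine (le_inf le_normalizer (le_iInf fun m => ?_)).trans <|
    (inf_le_inf_left _ (iInf_normalizer_le_normalizer_iInf _)).trans
      inf_normalizer_le_normalizer_inf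
  exact (map_le_iff_le_comap.mp (fitting_spec _).2.1).trans (le_normalizer_comap _)

theorem le_levelwiseFitting {L : Subgroup (AutT d)} (hLG : L ≤ G) (hGL : G ≤ normalizer L)
    (hL : ∀ m, Group.IsNilpotent (L.map (levelHom d m))) : L ≤ levelwiseFitting d G := by
  refine le_inf hLG (le_iInf fun m => map_le_iff_le_comap.mp ?_)
  have := hL m
  exact le_fitting (map_mono hLG) ((map_mono hGL).trans (le_normalizer_map _))

theorem IsFractal.isSelfSimilar_levelwiseFitting (hG : IsFractal d G) :
    IsSelfSimilar d (levelwiseFitting d G) := fun v =>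
  le_levelwiseFitting ((secSG_mono levelwiseFitting_le v).trans (hG v).le)
    (hG.le_normalizer_secSG le_normalizer_levelwiseFitting v)
    fun m => have := isNilpotent_map_levelwiseFitting (G := G) (v.length + m)
      isNilpotent_map_secSG

end LevelwiseFitting

/-- **Open normal pronilpotent subgroups are self-similarity-closed.**
Let `d ≥ 2` and let `G` be a closed fractal subgroup of `Aut T_d`.  If `H` is an open
normal subgroup of `G` that is pronilpotent, then the self-similar closure of `H` in `G`
is an open, normal, pronilpotent subgroup of `G`. -/
theorem pronilpotent_selfSimilarClosure (d : ℕ) (hd : 2 ≤ d)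
    (G : Subgroup (AutT d)) (hGclosed : IsClosed (G : Set (AutT d)))
    (hGfractal : IsFractal d G)
    (H : Subgroup (AutT d)) (hHG : H ≤ G)
    (hHopen : IsOpen ((H.subgroupOf G) : Set G))
    (hHnormal : (H.subgroupOf G).Normal)
    (hHnilp : Pronilpotent H) :
    ∀ J : Subgroup (AutT d), IsSelfSimilarClosure d G H J →
      IsOpen ((J.subgroupOf G) : Set G) ∧ (J.subgroupOf G).Normal ∧ Pronilpotent J := by
  rintro J ⟨hHJ, hJG, hJclosed, hJss, hJmin⟩
  have hGH : G ≤ normalizer H := (normal_subgroupOf_iff_le_normalizer hHG).mp hHnormal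
  have hGJ : G ≤ normalizer J := by
    have hJcore : J ≤ normalCoreIn G J := hJmin _ (le_normalCoreIn hHJ hGH)
      (normalCoreIn_le.trans hJG) (isClosed_normalCoreIn hJclosed)
      (hGfractal.isSelfSimilar_normalCoreIn hJss)
    exact le_antisymm normalCoreIn_le hJcore ▸ le_normalizer_normalCoreIn
  have hJfit : J ≤ levelwiseFitting d G := hJmin _
    (le_levelwiseFitting hHG hGH ((pronilpotent_iff (by omega) H).mp hHnilp))
    levelwiseFitting_le (isClosed_levelwiseFitting hGclosed)
    hGfractal.isSelfSimilar_levelwiseFitting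
  refine ⟨isOpen_mono (comap_mono hHJ) hHopen,
    (normal_subgroupOf_iff_le_normalizer hJG).mpr hGJ,
    (pronilpotent_iff (by omega) J).mpr fun m => ?_⟩
  have := isNilpotent_map_levelwiseFitting (G := G) m
  exact isNilpotent_of_le (map_mono hJfit)

end TreeDyn
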